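/- For n-th harmonic generation (N = M = m_1 = 1, n_1 = n), the reduced operator H_{1,red} = ζ^{−1} Π_{j=0}^{n−1}(ε − j + n ζ∂_ζ) + ζ (r − ζ∂_ζ) acting on polynomials of degree ≤ r equals n^n J⁻ Π_{j=0, j≠ε}^{n−1} (J⁰ + (ε−j)/n + r/2) − J⁺, where J⁺ = ζ²∂_ζ − rζ, J⁰ = ζ∂_ζ − r/2, J⁻ = ∂_ζ. -/

import Mathlib

open Polynomial

/-- The Euler operator `ζ∂_ζ`. -/
noncomputable def euler : Module.End ℝ (Polynomial ℝ) :=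
  (LinearMap.mulLeft ℝ (X : Polynomial ℝ)).comp derivative

/-- `J⁻ = ∂_ζ`. -/
noncomputable def Jm : Module.End ℝ (Polynomial ℝ) := derivative

/-- `J⁰ = ζ∂_ζ - r/2`. -/
noncomputable def J0 (r : ℝ) : Module.End ℝ (Polynomial ℝ) := euler - (r / 2) • 1

/-- `J⁺ = ζ²∂_ζ - rζ`. -/
noncomputable def Jp (r : ℝ) : Module.End ℝ (Polynomial ℝ) :=
  (LinearMap.mulLeft ℝ ((X : Polynomial ℝ) ^ 2)).comp derivative -
    r • LinearMap.mulLeft ℝ (X : Polynomial ℝ)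

/-- The reduced Hamiltonian for `n`-th harmonic generation:
`H₁,red = ζ⁻¹ Π_{j=0}^{n-1} (ε - j + n ζ∂_ζ) + ζ (r - ζ∂_ζ)` (the `ζ⁻¹` implemented by
`Polynomial.divX`). -/
noncomputable def H1redHarm (n ε r : ℕ) (P : Polynomial ℝ) : Polynomial ℝ :=
  divX ((Polynomial.aeval euler
      (∏ j ∈ Finset.range n, ((n : ℝ) • X + C ((ε : ℝ) - j)))) P) +
    X * ((r : ℝ) • P - euler P)

/-!
Pulling `n` out of every factor, `Π_j (ε - j + n ζ∂_ζ) = n^n · Π_{j≠ε} (ζ∂_ζ + (ε-j)/n) · ζ∂_ζ`, and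
`ζ⁻¹ ζ∂_ζ = ∂_ζ`; since `J⁰ + r/2 = ζ∂_ζ`, the remaining factors are those of the claimed form.
The other summand is `ζ (r - ζ∂_ζ) = -J⁺`.
-/

theorem Polynomial.divX_X_mul {R : Type*} [Semiring R] (p : R[X]) : divX (X * p) = p := by
  ext; simp [coeff_X_mul]

theorem Polynomial.divX_smul {R : Type*} [Semiring R] (a : R) (p : R[X]) :
    divX (a • p) = a • divX p := by
  ext; simp

theorem Polynomial.prod_smul_X_add_C {ι K : Type*} [Field K] (s : Finset ι) {c : K} (hc : c ≠ 0)
    (d : ι → K) : ∏ j ∈ s, (c • X + C (d j)) = C (c ^ s.card) * ∏ j ∈ s, (X + C (d j / c)) := by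
  rw [map_pow, ← Finset.prod_const, ← Finset.prod_mul_distrib]
  refine Finset.prod_congr rfl fun j _ => ?_
  rw [mul_add, ← C_mul, mul_div_cancel₀ _ hc, smul_eq_C_mul]

theorem Polynomial.prod_X_add_C_comp_X_sub_C {ι R : Type*} [CommRing R] (s : Finset ι)
    (d : ι → R) (b : R) :
    (∏ j ∈ s, (X + C (d j + b))).comp (X - C b) = ∏ j ∈ s, (X + C (d j)) := by
  rw [prod_comp]
  refine Finset.prod_congr rfl fun j _ => ?_
  simp only [add_comp, X_comp, C_comp, C_add]
  ring

theorem divX_euler (P : ℝ[X]) : divX (euler P) = derivative P :=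
  divX_X_mul _

theorem divX_aeval_euler_mul_X (q P : ℝ[X]) :
    divX (aeval euler (q * X) P) = derivative (aeval euler q P) := by
  rw [mul_comm, map_mul, aeval_X, Module.End.mul_apply, divX_euler]

theorem J0_eq_aeval_euler (r : ℝ) : J0 r = aeval euler (X - C (r / 2)) := by
  rw [J0, map_sub, aeval_X, aeval_C, Algebra.algebraMap_eq_smul_one]

theorem Jp_apply (r : ℝ) (P : ℝ[X]) : Jp r P = X * (euler P - r • P) := by
  simp only [Jp, euler, LinearMap.sub_apply, LinearMap.comp_apply, LinearMap.mulLeft_apply,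
    LinearMap.smul_apply, mul_sub, mul_smul_comm]
  ring

theorem H1redHarm_eq_divX_sub_Jp (n ε r : ℕ) (P : ℝ[X]) :
    H1redHarm n ε r P =
      divX (aeval euler (∏ j ∈ Finset.range n, ((n : ℝ) • X + C ((ε : ℝ) - j))) P) - Jp r P := by
  rw [H1redHarm, Jp_apply, ← neg_sub (euler P), mul_neg, ← sub_eq_add_neg]

theorem harmonic_generation_sl2_form (n ε r : ℕ) (hε : ε < n) :
    ∀ P ∈ degreeLE ℝ (r : ℕ),
      H1redHarm n ε r P =
        ((n : ℝ) ^ n •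
          (Jm * Polynomial.aeval (J0 (r : ℝ))
            (∏ j ∈ (Finset.range n).erase ε,
              (X + C (((ε : ℝ) - j) / n + (r : ℝ) / 2)))) - Jp (r : ℝ)) P := by
  intro P _
  have hn : (n : ℝ) ≠ 0 := Nat.cast_ne_zero.2 (by omega)
  set q := ∏ j ∈ (Finset.range n).erase ε, (X + C (((ε : ℝ) - j) / n + (r : ℝ) / 2))
  have hfactor : ∏ j ∈ Finset.range n, ((n : ℝ) • X + C ((ε : ℝ) - j)) =
      C ((n : ℝ) ^ n) * (q.comp (X - C ((r : ℝ) / 2)) * X) := by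
    rw [prod_smul_X_add_C _ hn, Finset.card_range,
      ← Finset.mul_prod_erase _ _ (Finset.mem_range.2 hε), prod_X_add_C_comp_X_sub_C,
      sub_self, zero_div, C_0, add_zero, mul_comm X]
  have hJ0 : aeval (J0 r) q = aeval euler (q.comp (X - C ((r : ℝ) / 2))) := by
    rw [J0_eq_aeval_euler, aeval_comp]
  rw [H1redHarm_eq_divX_sub_Jp, hfactor, map_mul, aeval_C, Module.End.mul_apply,
    Module.algebraMap_end_apply, divX_smul, divX_aeval_euler_mul_X, ← hJ0]
  rfl
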